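/- Let X be a space. Then X has Property (T) if and only if there exist a controlled generating set E ⊆ X×X and a constant c > 0 such that for every representation π of ℂ_u[X] on a complex Hilbert space H and every ξ ∈ (H^π)^⊥, there is a partial translation v with supp(v) ⊆ E satisfying ‖π(v)ξ − π(vv*)ξ‖ ≥ c‖ξ‖. (That is, it suffices to verify the Kazhdan-type inequality for a single controlled generating set.) -/

import Mathlib

open scoped ENNReal Classical

noncomputable section

namespace GeomPropT

variable {X : Type*}

/-- The tube of diameter `R` in `X × X`. -/
def Tube (X : Type*) [EMetricSpace X] (R : ℝ≥0∞) : Set (X × X) :=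
  {p : X × X | edist p.1 p.2 ≤ R}

/-- A subset of `X × X` is controlled if it is contained in a tube of finite diameter. -/
def Controlled [EMetricSpace X] (E : Set (X × X)) : Prop :=
  ∃ R : ℝ≥0∞, R < ⊤ ∧ E ⊆ Tube X R

/-- `X` has bounded geometry if balls of any given finite radius have uniformly
bounded cardinality. -/
def BoundedGeometry (X : Type*) [EMetricSpace X] : Prop :=
  ∀ R : ℝ≥0∞, R < ⊤ → ∃ N : ℕ, ∀ x : X,
    {y : X | edist x y ≤ R}.Finite ∧ {y : X | edist x y ≤ R}.ncard ≤ N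

/-- Composition of subsets of `X × X`. -/
def compRel (E F : Set (X × X)) : Set (X × X) :=
  {p : X × X | ∃ z : X, (p.1, z) ∈ E ∧ (z, p.2) ∈ F}

/-- `compPow E n` is the `(n+1)`-fold composition `E^{∘(n+1)}`. -/
def compPow (E : Set (X × X)) : ℕ → Set (X × X)
  | 0 => E
  | n + 1 => compRel E (compPow E n)

/-- A controlled set is generating if every controlled set is contained in some
iterated composition of it. -/
def Generating [EMetricSpace X] (E : Set (X × X)) : Prop :=
  Controlled E ∧ ∀ F : Set (X × X), Controlled F → ∃ n : ℕ, F ⊆ compPow E n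

/-- `X` is monogenic if it admits a controlled generating set. -/
def Monogenic (X : Type*) [EMetricSpace X] : Prop :=
  ∃ E : Set (X × X), Generating E

/-- A "space": bounded geometry, monogenic, with at most countably many coarse
components. -/
structure IsSpace (X : Type*) [EMetricSpace X] : Prop where
  boundedGeometry : BoundedGeometry X
  monogenic : Monogenic X
  countableComponents : Set.Countable {C : Set X | ∃ x : X, C = {y : X | edist x y < ⊤}}

/-- The support of a matrix. -/
def matSupport (T : X → X → ℂ) : Set (X × X) := {p : X × X | T p.1 p.2 ≠ 0}

/-- Membership in `ℂ_u[X]`: uniformly bounded entries and controlled support. -/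
def CuElem [EMetricSpace X] (T : X → X → ℂ) : Prop :=
  (∃ M : ℝ, ∀ x y : X, ‖T x y‖ ≤ M) ∧ Controlled (matSupport T)

/-- The identity matrix. -/
def matOne : X → X → ℂ := fun x y => if x = y then 1 else 0

/-- Matrix multiplication. -/
def matMul (T S : X → X → ℂ) : X → X → ℂ := fun x y => ∑' z : X, T x z * S z y

/-- Matrix adjoint. -/
def matStar (T : X → X → ℂ) : X → X → ℂ := fun x y => starRingEnd ℂ (T y x)

/-- Matrix powers. -/
def matPow (A : X → X → ℂ) : ℕ → X → X → ℂ
  | 0 => matOne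
  | n + 1 => matMul A (matPow A n)

/-- A function `f ∈ ℓ∞(X)` viewed as a diagonal matrix. -/
def diag (f : X → ℂ) : X → X → ℂ := fun x y => if x = y then f x else 0

/-- The matrix of a partial translation: a `{0,1}`-matrix with at most one `1` in
each row and each column, and controlled support. -/
def IsPartialTranslation [EMetricSpace X] (v : X → X → ℂ) : Prop :=
  (∀ x y : X, v x y = 0 ∨ v x y = 1) ∧
  (∀ x y y' : X, v x y = 1 → v x y' = 1 → y = y') ∧
  (∀ x x' y : X, v x y = 1 → v x' y = 1 → x = x') ∧
  Controlled (matSupport v)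

/-- Membership in `S_X`: finite propagation permutation matrices. -/
def IsPermMatrix [EMetricSpace X] (A : X → X → ℂ) : Prop :=
  (∀ x y : X, A x y = 0 ∨ A x y = 1) ∧
  (∀ x : X, ∃! y : X, A x y = 1) ∧
  (∀ y : X, ∃! x : X, A x y = 1) ∧
  Controlled (matSupport A)

/-- Membership in `A_X` with common row/column sum `c`. -/
def MemAX [EMetricSpace X] (A : X → X → ℂ) (c : ℂ) : Prop :=
  CuElem A ∧ ∀ x : X, HasSum (fun y => A x y) c ∧ HasSum (fun y => A y x) c

variable {H : Type*} [NormedAddCommGroup H] [InnerProductSpace ℂ H]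

/-- A representation of `ℂ_u[X]`: a unital `*`-homomorphism into `B(H)`. -/
structure IsRepresentation [EMetricSpace X] [CompleteSpace H]
    (π : (X → X → ℂ) → (H →L[ℂ] H)) : Prop where
  map_one : π matOne = 1
  map_add : ∀ T S : X → X → ℂ, CuElem T → CuElem S → π (T + S) = π T + π S
  map_smul : ∀ (c : ℂ) (T : X → X → ℂ), CuElem T → π (c • T) = c • π T
  map_mul : ∀ T S : X → X → ℂ, CuElem T → CuElem S → π (matMul T S) = π T * π S
  map_star : ∀ T : X → X → ℂ, CuElem T → π (matStar T) = ContinuousLinearMap.adjoint (π T)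

/-- The subspace `H^π` of invariant vectors. -/
def invariantSubmodule [EMetricSpace X] (π : (X → X → ℂ) → (H →L[ℂ] H)) :
    Submodule ℂ H where
  carrier := {ξ : H | ∀ v : X → X → ℂ, IsPartialTranslation v →
    π v ξ = π (matMul v (matStar v)) ξ}
  add_mem' := by
    intro a b ha hb v hv
    simp only [map_add, ha v hv, hb v hv]
  zero_mem' := by
    intro v hv
    simp
  smul_mem' := by
    intro c ξ hξ v hv
    simp only [map_smul, hξ v hv]

/-- `p` is the orthogonal projection onto `S`. -/
def IsOrthoProjOnto (p : H →L[ℂ] H) (S : Submodule ℂ H) : Prop :=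
  ∀ ξ : H, p ξ ∈ S ∧ ξ - p ξ ∈ Sᗮ

/-- Geometric Property (T). -/
def HasPropertyT (X : Type*) [EMetricSpace X] : Prop :=
  ∀ E : Set (X × X), Generating E →
    ∃ c : ℝ, 0 < c ∧
      ∀ (H : Type) [NormedAddCommGroup H] [InnerProductSpace ℂ H] [CompleteSpace H]
        (π : (X → X → ℂ) → (H →L[ℂ] H)), IsRepresentation π →
        ∀ ξ ∈ (invariantSubmodule π)ᗮ,
          ∃ v : X → X → ℂ, IsPartialTranslation v ∧ matSupport v ⊆ E ∧
            c * ‖ξ‖ ≤ ‖π v ξ - π (matMul v (matStar v)) ξ‖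

/-- Bounded functions (elements of `ℓ∞(X)`). -/
def BddFun (f : X → ℂ) : Prop := ∃ M : ℝ, ∀ x : X, ‖f x‖ ≤ M

/-- `f ∘ t`, extended by `0`, where `t` is the partial translation with matrix `v`. -/
def translateFun (v : X → X → ℂ) (f : X → ℂ) : X → ℂ := fun y => ∑' x : X, v x y * f x

/-- An invariant mean on `ℓ∞(X)`: a positive unital linear functional invariant
under partial translations. -/
def IsInvariantMean [EMetricSpace X] (φ : (X → ℂ) → ℂ) : Prop :=
  (∀ f g : X → ℂ, BddFun f → BddFun g → φ (f + g) = φ f + φ g) ∧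
  (∀ (c : ℂ) (f : X → ℂ), BddFun f → φ (c • f) = c * φ f) ∧
  φ (fun _ => 1) = 1 ∧
  (∀ f : X → ℂ, BddFun f → (∀ x, 0 ≤ (f x).re ∧ (f x).im = 0) →
    0 ≤ (φ f).re ∧ (φ f).im = 0) ∧
  (∀ f : X → ℂ, BddFun f → ∀ v : X → X → ℂ, IsPartialTranslation v →
    (∀ x : X, f x ≠ 0 → ∃ y : X, v x y = 1) → φ (translateFun v f) = φ f)

/-- `X` is amenable if `ℓ∞(X)` admits an invariant mean. -/
def IsAmenable (X : Type*) [EMetricSpace X] : Prop :=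
  ∃ φ : (X → ℂ) → ℂ, IsInvariantMean φ

/-- A representation of `ℂ_u[X]` bundled with its Hilbert space. -/
structure HilbertRep (X : Type*) [EMetricSpace X] where
  H : Type
  [nacg : NormedAddCommGroup H]
  [ips : InnerProductSpace ℂ H]
  [cs : CompleteSpace H]
  π : (X → X → ℂ) → (H →L[ℂ] H)
  rep : IsRepresentation π

attribute [instance] HilbertRep.nacg HilbertRep.ips HilbertRep.cs

/-!
Only the converse needs an argument. Let `E` satisfy the Kazhdan inequality with constant `c`
and let `F` be another controlled generating set, so `E ⊆ F^{∘(n+1)}` for some `n`. Write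
`D(v) = π(v)ξ - π(vv*)ξ`. It suffices to find `K`, depending only on `F` and `n`, such that
`‖D(v)‖ ≤ K ε` for every partial translation `v` supported in `F^{∘(n+1)}` whenever
`‖D(w)‖ ≤ ε` for all partial translations `w` supported in `F`: then `c / (K + 1)` is a
Kazhdan constant for `F`.

By bounded geometry, a partial translation supported in `F ∘ C` is a sum of `N` partial
translations with disjoint domains, each a product `ab` with `a` supported in `F` and `b` in
`C`, where `N` only depends on `C`. The defect is additive over such sums, and
`‖D(ab)‖ ≤ ‖D(a)‖ + ‖D(b)‖` because `π(a)`, `π(b)` are partial isometries whose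
projections `π(bb*)` and `π(a*a)` commute and `‖D(a*)‖ = ‖D(a)‖`. Induction on `n` gives
`K_{n+1} = N (1 + K_n)`.
-/

open Function SetRel

section Relations

structure IsPartialBij (G : SetRel X X) : Prop where
  rightUnique : Relator.RightUnique (· ~[G] ·)
  leftUnique : Relator.LeftUnique (· ~[G] ·)

namespace IsPartialBij

variable {G G' : SetRel X X}

theorem mono (hG : IsPartialBij G) (h : G' ⊆ G) : IsPartialBij G' :=
  ⟨fun _ _ _ h₁ h₂ => hG.rightUnique (h h₁) (h h₂), fun _ _ _ h₁ h₂ => hG.leftUnique (h h₁) (h h₂)⟩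

theorem inv (hG : IsPartialBij G) : IsPartialBij G.inv :=
  ⟨fun _ _ _ h₁ h₂ => hG.leftUnique h₁ h₂, fun _ _ _ h₁ h₂ => hG.rightUnique h₁ h₂⟩

theorem comp (hG : IsPartialBij G) (hG' : IsPartialBij G') : IsPartialBij (G ○ G') := by
  refine ⟨?_, ?_⟩
  · rintro x y y' ⟨z, hxz, hzy⟩ ⟨z', hxz', hzy'⟩
    obtain rfl := hG.rightUnique hxz hxz'
    exact hG'.rightUnique hzy hzy'
  · rintro x x' y ⟨z, hxz, hzy⟩ ⟨z', hxz', hzy'⟩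
    obtain rfl := hG'.leftUnique hzy hzy'
    exact hG.leftUnique hxz hxz'

theorem injective_fst (hG : IsPartialBij G) : Injective fun p : G => p.1.1 := by
  rintro ⟨⟨x, y⟩, hp⟩ ⟨⟨x', y'⟩, hq⟩ (rfl : x = x')
  obtain rfl := hG.rightUnique hp hq
  rfl

theorem injective_snd (hG : IsPartialBij G) : Injective fun p : G => p.1.2 := by
  rintro ⟨⟨x, y⟩, hp⟩ ⟨⟨x', y'⟩, hq⟩ (rfl : y = y')
  obtain rfl := hG.leftUnique hp hq
  rfl

theorem comp_inv_subset_id (hG : IsPartialBij G) : G ○ G.inv ⊆ SetRel.id := by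
  rintro ⟨x, x'⟩ ⟨y, hxy, hx'y⟩
  exact hG.leftUnique hxy hx'y

theorem inv_comp_subset_id (hG : IsPartialBij G) : G.inv ○ G ⊆ SetRel.id := by
  rintro ⟨y, y'⟩ ⟨x, hxy, hxy'⟩
  exact hG.rightUnique hxy hxy'

theorem comp_inv_comp (hG : IsPartialBij G) : G ○ G.inv ○ G = G := by
  refine subset_antisymm ?_ fun ⟨x, y⟩ hxy => ⟨x, ⟨y, hxy, hxy⟩, hxy⟩
  simpa using comp_subset_comp_left (S := G) hG.comp_inv_subset_id

theorem comp_inv_eq_empty (hG : IsPartialBij G) {G₁ G₂ : SetRel X X} (h₁ : G₁ ⊆ G)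
    (h₂ : G₂ ⊆ G) (hd : Disjoint G₁ G₂) : G₁ ○ G₂.inv = ∅ := by
  refine Set.eq_empty_of_forall_notMem fun ⟨x, y⟩ ⟨z, hxz, hyz⟩ => ?_
  obtain rfl := hG.leftUnique (h₁ hxz) (h₂ hyz)
  exact hd.notMem_of_mem_left hxz hyz

theorem of_image {α : Type*} {f : α → X × X} {s : Set α} (h₁ : s.InjOn (Prod.fst ∘ f))
    (h₂ : s.InjOn (Prod.snd ∘ f)) : IsPartialBij (f '' s) := by
  refine ⟨?_, ?_⟩
  · rintro x y y' ⟨a, ha, hfa⟩ ⟨b, hb, hfb⟩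
    obtain rfl : a = b := h₁ ha hb (by simp [hfa, hfb])
    exact (Prod.ext_iff.1 (hfa.symm.trans hfb)).2
  · rintro x x' y ⟨a, ha, hfa⟩ ⟨b, hb, hfb⟩
    obtain rfl : a = b := h₂ ha hb (by simp [hfa, hfb])
    exact (Prod.ext_iff.1 (hfa.symm.trans hfb)).1

end IsPartialBij

theorem comp_comm_of_subset_id {S T : SetRel X X} (hS : S ⊆ SetRel.id) (hT : T ⊆ SetRel.id) :
    S ○ T = T ○ S := by
  ext ⟨x, y⟩
  constructor
  · rintro ⟨z, hxz, hzy⟩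
    obtain rfl : x = z := hS hxz
    obtain rfl : x = y := hT hzy
    exact ⟨x, hzy, hxz⟩
  · rintro ⟨z, hxz, hzy⟩
    obtain rfl : x = z := hT hxz
    obtain rfl : x = y := hS hzy
    exact ⟨x, hzy, hxz⟩

theorem image_comp_image {α : Type*} {s : Set α} {f g h : α → X} (hg : s.InjOn g) :
    (fun a => (f a, g a)) '' s ○ (fun a => (g a, h a)) '' s = (fun a => (f a, h a)) '' s := by
  ext ⟨x, y⟩
  constructor
  · rintro ⟨z, ⟨a, ha, hxz⟩, ⟨b, hb, hzy⟩⟩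
    simp only [Prod.mk.injEq] at hxz hzy
    obtain rfl : a = b := hg ha hb (hxz.2.trans hzy.1.symm)
    exact ⟨a, ha, Prod.ext hxz.1 hzy.2⟩
  · rintro ⟨a, ha, hxy⟩
    obtain ⟨rfl, rfl⟩ := Prod.mk.inj hxy
    exact ⟨g a, ⟨a, ha, rfl⟩, ⟨a, ha, rfl⟩⟩

end Relations

section Matrices

variable {G G' : SetRel X X}

/-- For a partial bijection `G`, the matrix of the partial translation sending `y` to `x`
whenever `(x, y) ∈ G`. -/
def relMatrix (G : SetRel X X) : X → X → ℂ := fun x y => if x ~[G] y then 1 else 0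

@[simp]
theorem matSupport_relMatrix : matSupport (relMatrix G) = G := by
  ext ⟨x, y⟩
  by_cases h : x ~[G] y <;> simp [matSupport, relMatrix, h]

theorem relMatrix_eq_one {x y : X} : relMatrix G x y = 1 ↔ x ~[G] y := by
  by_cases h : x ~[G] y <;> simp [relMatrix, h]

@[simp]
theorem relMatrix_empty : relMatrix (∅ : SetRel X X) = 0 := by
  funext x y
  simp [relMatrix]

theorem matSupport_matStar (T : X → X → ℂ) :
    matSupport (matStar T) = SetRel.inv (matSupport T) := by
  ext ⟨x, y⟩
  simp [matSupport, matStar]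

theorem matStar_relMatrix : matStar (relMatrix G) = relMatrix G.inv := by
  funext x y
  by_cases h : y ~[G] x <;> simp [matStar, relMatrix, h]

theorem matMul_relMatrix (hG : Relator.RightUnique (· ~[G] ·)) :
    matMul (relMatrix G) (relMatrix G') = relMatrix (G ○ G') := by
  funext x y
  simp only [matMul, relMatrix]
  by_cases h : x ~[G ○ G'] y
  · obtain ⟨z, hxz, hzy⟩ := h
    rw [tsum_eq_single z fun z' hz' => by simp [show ¬x ~[G] z' from fun h => hz' (hG h hxz)]]
    simpa [hxz, hzy] using ⟨z, hxz, hzy⟩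
  · rw [if_neg h]
    refine (tsum_congr fun z => ?_).trans tsum_zero
    by_cases hxz : x ~[G] z
    · simp [hxz, show ¬z ~[G'] y from fun hzy => h ⟨z, hxz, hzy⟩]
    · simp [hxz]

theorem relMatrix_iUnion {ι : Type*} [Fintype ι] {G : ι → SetRel X X}
    (hG : Pairwise (Disjoint on G)) : relMatrix (⋃ i, G i) = ∑ i, relMatrix (G i) := by
  funext x y
  simp only [relMatrix, Finset.sum_apply, Set.mem_iUnion]
  by_cases h : ∃ i, x ~[G i] y
  · obtain ⟨i, hi⟩ := h
    rw [if_pos ⟨i, hi⟩, Finset.sum_eq_single i (fun j _ hji => if_neg fun hj =>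
      (hG hji).notMem_of_mem_left hj hi) (by simp), if_pos hi]
  · simp only [not_exists] at h
    simp [h]

end Matrices

section Controlled

variable [EMetricSpace X] {E F : SetRel X X}

theorem Controlled.mono (hF : Controlled F) (h : E ⊆ F) : Controlled E :=
  let ⟨R, hR, hFR⟩ := hF
  ⟨R, hR, h.trans hFR⟩

theorem controlled_empty : Controlled (∅ : SetRel X X) :=
  ⟨0, ENNReal.zero_lt_top, Set.empty_subset _⟩

theorem Controlled.inv (hE : Controlled E) : Controlled E.inv := by
  obtain ⟨R, hR, hER⟩ := hE
  exact ⟨R, hR, fun p hp => by simpa [Tube, edist_comm] using hER hp⟩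

theorem Controlled.union (hE : Controlled E) (hF : Controlled F) : Controlled (E ∪ F) := by
  obtain ⟨R, hR, hER⟩ := hE
  obtain ⟨S, hS, hFS⟩ := hF
  refine ⟨max R S, max_lt hR hS, Set.union_subset ?_ ?_⟩
  · exact hER.trans fun p (hp : edist p.1 p.2 ≤ R) => hp.trans (le_max_left R S)
  · exact hFS.trans fun p (hp : edist p.1 p.2 ≤ S) => hp.trans (le_max_right R S)

theorem Controlled.comp (hE : Controlled E) (hF : Controlled F) : Controlled (E ○ F) := by
  obtain ⟨R, hR, hER⟩ := hE
  obtain ⟨S, hS, hFS⟩ := hF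
  refine ⟨R + S, ENNReal.add_lt_top.2 ⟨hR, hS⟩, ?_⟩
  rintro ⟨x, y⟩ ⟨z, hxz, hzy⟩
  exact (edist_triangle x z y).trans (add_le_add (hER hxz) (hFS hzy))

theorem Controlled.compPow (hF : Controlled F) : ∀ n, Controlled (compPow F n)
  | 0 => hF
  | n + 1 => hF.comp (hF.compPow n)

end Controlled

section CuElem

variable [EMetricSpace X] {T S : X → X → ℂ}

theorem cuElem_zero : CuElem (0 : X → X → ℂ) :=
  ⟨⟨0, by simp⟩, controlled_empty.mono fun _ h => h rfl⟩

theorem CuElem.add (hT : CuElem T) (hS : CuElem S) : CuElem (T + S) := by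
  obtain ⟨⟨M, hM⟩, hTc⟩ := hT
  obtain ⟨⟨M', hM'⟩, hSc⟩ := hS
  refine ⟨⟨M + M', fun x y => (norm_add_le _ _).trans (add_le_add (hM x y) (hM' x y))⟩,
    (hTc.union hSc).mono fun p hp => ?_⟩
  by_contra h
  simp_all [matSupport]

theorem CuElem.sum {ι : Type*} {s : Finset ι} {T : ι → X → X → ℂ} (hT : ∀ i ∈ s, CuElem (T i)) :
    CuElem (∑ i ∈ s, T i) :=
  Finset.sum_induction _ CuElem (fun _ _ => CuElem.add) cuElem_zero hT

theorem CuElem.matStar (hT : CuElem T) : CuElem (matStar T) := by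
  obtain ⟨⟨M, hM⟩, hTc⟩ := hT
  exact ⟨⟨M, fun x y => by simpa [GeomPropT.matStar] using hM y x⟩,
    matSupport_matStar T ▸ hTc.inv⟩

theorem cuElem_relMatrix {G : SetRel X X} (hG : Controlled G) : CuElem (relMatrix G) :=
  ⟨⟨1, fun x y => by by_cases h : x ~[G] y <;> simp [relMatrix, h]⟩, by simpa using hG⟩

end CuElem

section PartialTranslation

variable [EMetricSpace X] {v : X → X → ℂ}

theorem IsPartialTranslation.relMatrix_matSupport (hv : IsPartialTranslation v) :
    relMatrix (matSupport v) = v := by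
  funext x y
  rcases hv.1 x y with h | h <;> simp [relMatrix, matSupport, h]

theorem IsPartialTranslation.isPartialBij (hv : IsPartialTranslation v) :
    IsPartialBij (matSupport v) := by
  have h₁ : ∀ {x y}, x ~[matSupport v] y → v x y = 1 := fun h => (hv.1 _ _).resolve_left h
  exact ⟨fun x y y' h h' => hv.2.1 x y y' (h₁ h) (h₁ h'),
    fun x x' y h h' => hv.2.2.1 x x' y (h₁ h) (h₁ h')⟩

theorem isPartialTranslation_relMatrix {G : SetRel X X} (hG : IsPartialBij G)
    (hGc : Controlled G) : IsPartialTranslation (relMatrix G) := by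
  refine ⟨fun x y => ?_, fun x y y' h h' => hG.rightUnique (relMatrix_eq_one.1 h)
    (relMatrix_eq_one.1 h'), fun x x' y h h' => hG.leftUnique (relMatrix_eq_one.1 h)
    (relMatrix_eq_one.1 h'), by simpa using hGc⟩
  by_cases h : x ~[G] y <;> simp [relMatrix, h]

theorem IsPartialTranslation.cuElem (hv : IsPartialTranslation v) : CuElem v :=
  hv.relMatrix_matSupport ▸ cuElem_relMatrix hv.2.2.2

end PartialTranslation

theorem isStarProjection_mul_star_self {R : Type*} [Semigroup R] [StarMul R] {a : R}
    (ha : a * star a * a = a) : IsStarProjection (a * star a) :=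
  ⟨by rw [IsIdempotentElem, ← mul_assoc, ha], IsSelfAdjoint.mul_star_self a⟩

theorem norm_le_one_of_mul_star_mul_self {E : Type*} [NonUnitalNormedRing E] [StarRing E]
    [CStarRing E] {a : E} (ha : a * star a * a = a) : ‖a‖ ≤ 1 := by
  have := (isStarProjection_mul_star_self ha).norm_le
  rw [CStarRing.norm_self_mul_star] at this
  nlinarith [norm_nonneg a]

section Defect

open scoped InnerProduct InnerProductSpace
open ContinuousLinearMap

variable [CompleteSpace H] {A B : H →L[ℂ] H}

def defect (A : H →L[ℂ] H) (ξ : H) : H := A ξ - (A * A†) ξ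

theorem norm_defect_sq (hA : A * A† * A = A) (ξ : H) :
    ‖defect A ξ‖ ^ 2 = RCLike.re ⟪(A† * A) ξ, ξ⟫_ℂ + RCLike.re ⟪(A * A†) ξ, ξ⟫_ℂ
      - 2 * RCLike.re ⟪A ξ, ξ⟫_ℂ := by
  have hPsa : (A * A†)† = A * A† := by simp only [← star_eq_adjoint, star_mul, star_star]
  have hP : (A * A†)† * (A * A†) = A * A† := by rw [hPsa, ← mul_assoc, hA]
  have hAP : ⟪A ξ, (A * A†) ξ⟫_ℂ = ⟪A ξ, ξ⟫_ℂ := by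
    rw [← adjoint_inner_left, hPsa, ← mul_apply_eq_comp, hA]
  have hAξ : ‖A ξ‖ ^ 2 = RCLike.re ⟪(A† * A) ξ, ξ⟫_ℂ := apply_norm_sq_eq_inner_adjoint_left A ξ
  have hPξ : ‖(A * A†) ξ‖ ^ 2 = RCLike.re ⟪(A * A†) ξ, ξ⟫_ℂ :=
    (apply_norm_sq_eq_inner_adjoint_left (A * A†) ξ).trans (by rw [← mul_def, hP])
  rw [defect, norm_sub_sq (𝕜 := ℂ), hAP, hAξ, hPξ]
  ring

theorem norm_defect_adjoint (hA : A * A† * A = A) (ξ : H) : ‖defect (A†) ξ‖ = ‖defect A ξ‖ := by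
  have hA' : A† * A†† * A† = A† := by
    simpa only [← star_eq_adjoint, star_mul, star_star, mul_assoc] using congrArg star hA
  have hre : RCLike.re ⟪(A†) ξ, ξ⟫_ℂ = RCLike.re ⟪A ξ, ξ⟫_ℂ := by
    rw [adjoint_inner_left, inner_re_symm]
  have h := norm_defect_sq hA' ξ
  rw [adjoint_adjoint, hre] at h
  rw [← pow_left_inj₀ (norm_nonneg _) (norm_nonneg _) two_ne_zero, h, norm_defect_sq hA]
  ring

theorem norm_defect_mul_le (hA : A * A† * A = A) (hB : B * B† * B = B)
    (hcomm : Commute (B * B†) (A† * A)) (ξ : H) :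
    ‖defect (A * B) ξ‖ ≤ ‖defect A ξ‖ + ‖defect B ξ‖ := by
  have hA1 : ‖A‖ ≤ 1 := norm_le_one_of_mul_star_mul_self hA
  have hBB1 : ‖B * B†‖ ≤ 1 := (isStarProjection_mul_star_self hB).norm_le
  have key : A * (B * B†) * (A† * A) = A * (B * B†) := by
    rw [mul_assoc, hcomm.eq, ← mul_assoc, ← mul_assoc A (A†) A, hA]
  have hdecomp : defect (A * B) ξ = A (defect B ξ) - (A * (B * B†)) (defect (A†) ξ) := by
    have hop : A * B - A * B * (A * B)† = A * (B - B * B†) - A * (B * B†) * (A† - A† * A) := by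
      rw [mul_sub _ (A†), key]
      simp only [← star_eq_adjoint, star_mul]
      noncomm_ring
    simpa [defect, mul_apply_eq_comp] using congrArg (· ξ) hop
  have hABB1 : ‖A * (B * B†)‖ ≤ 1 := (norm_mul_le _ _).trans (mul_le_one₀ hA1 (norm_nonneg _) hBB1)
  rw [hdecomp, ← norm_defect_adjoint hA ξ, add_comm]
  refine (norm_sub_le _ _).trans (add_le_add ?_ ?_)
  · exact (le_opNorm _ _).trans (mul_le_of_le_one_left (norm_nonneg _) hA1)
  · exact (le_opNorm _ _).trans (mul_le_of_le_one_left (norm_nonneg _) hABB1)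

theorem defect_sum {ι : Type*} [Fintype ι] {W : ι → H →L[ℂ] H}
    (hW : Pairwise fun i j => W i * (W j)† = 0) (ξ : H) :
    defect (∑ i, W i) ξ = ∑ i, defect (W i) ξ := by
  have hdiag : (∑ i, W i) * (∑ i, W i)† = ∑ i, W i * (W i)† := by
    rw [← star_eq_adjoint, star_sum, Finset.sum_mul_sum]
    refine Finset.sum_congr rfl fun i _ => Finset.sum_eq_single i (fun j _ hji => hW hji.symm) ?_
    simp
  simp only [defect, hdiag, sum_apply, Finset.sum_sub_distrib]

end Defect

namespace IsRepresentation

open scoped InnerProduct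

variable [EMetricSpace X] [CompleteSpace H] {π : (X → X → ℂ) → (H →L[ℂ] H)} {G G' : SetRel X X}

theorem map_zero (hπ : IsRepresentation π) : π 0 = 0 := by
  simpa using hπ.map_smul 0 0 cuElem_zero

theorem map_sum (hπ : IsRepresentation π) {ι : Type*} (s : Finset ι) {T : ι → X → X → ℂ}
    (hT : ∀ i ∈ s, CuElem (T i)) : π (∑ i ∈ s, T i) = ∑ i ∈ s, π (T i) := by
  induction s using Finset.cons_induction with
  | empty => simpa using hπ.map_zero
  | cons i s hi ih =>
    have hs : ∀ j ∈ s, CuElem (T j) := fun j hj => hT j (Finset.mem_cons_of_mem hj)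
    rw [Finset.sum_cons, Finset.sum_cons, hπ.map_add _ _ (hT i (Finset.mem_cons_self i s))
      (CuElem.sum hs), ih hs]

theorem sub_map_mul_matStar (hπ : IsRepresentation π) {T : X → X → ℂ} (hT : CuElem T)
    (ξ : H) : π T ξ - π (matMul T (matStar T)) ξ = defect (π T) ξ := by
  rw [defect, hπ.map_mul T _ hT hT.matStar, hπ.map_star T hT]

theorem map_relMatrix_comp (hπ : IsRepresentation π) (hG : Relator.RightUnique (· ~[G] ·))
    (hGc : Controlled G) (hG'c : Controlled G') :
    π (relMatrix (G ○ G')) = π (relMatrix G) * π (relMatrix G') := by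
  rw [← matMul_relMatrix hG, hπ.map_mul _ _ (cuElem_relMatrix hGc) (cuElem_relMatrix hG'c)]

theorem map_relMatrix_inv (hπ : IsRepresentation π) (hGc : Controlled G) :
    π (relMatrix G.inv) = (π (relMatrix G))† := by
  rw [← matStar_relMatrix, hπ.map_star _ (cuElem_relMatrix hGc)]

theorem mul_adjoint_mul_map_relMatrix (hπ : IsRepresentation π) (hG : IsPartialBij G)
    (hGc : Controlled G) :
    π (relMatrix G) * (π (relMatrix G))† * π (relMatrix G) = π (relMatrix G) := by
  rw [← hπ.map_relMatrix_inv hGc, ← hπ.map_relMatrix_comp hG.rightUnique hGc hGc.inv,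
    ← hπ.map_relMatrix_comp (hG.comp hG.inv).rightUnique (hGc.comp hGc.inv) hGc,
    hG.comp_inv_comp]

/-- Initial and final projections of partial translations commute, both being diagonal. -/
theorem commute_map_relMatrix (hπ : IsRepresentation π) (hG : IsPartialBij G)
    (hG' : IsPartialBij G') (hGc : Controlled G) (hG'c : Controlled G') :
    Commute (π (relMatrix G') * (π (relMatrix G'))†) ((π (relMatrix G))† * π (relMatrix G)) := by
  have hS := hG'.comp_inv_subset_id
  have hT := hG.inv_comp_subset_id
  have hSc := hG'c.comp hG'c.inv
  have hTc := hGc.inv.comp hGc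
  rw [← hπ.map_relMatrix_inv hG'c, ← hπ.map_relMatrix_comp hG'.rightUnique hG'c hG'c.inv,
    ← hπ.map_relMatrix_inv hGc, ← hπ.map_relMatrix_comp hG.inv.rightUnique hGc.inv hGc]
  rw [Commute, SemiconjBy, ← hπ.map_relMatrix_comp (hG'.comp hG'.inv).rightUnique hSc hTc,
    ← hπ.map_relMatrix_comp (hG.inv.comp hG).rightUnique hTc hSc, comp_comm_of_subset_id hS hT]

theorem norm_defect_map_relMatrix_comp_le (hπ : IsRepresentation π) (hG : IsPartialBij G)
    (hG' : IsPartialBij G') (hGc : Controlled G) (hG'c : Controlled G') (ξ : H) :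
    ‖defect (π (relMatrix (G ○ G'))) ξ‖ ≤
      ‖defect (π (relMatrix G)) ξ‖ + ‖defect (π (relMatrix G')) ξ‖ := by
  rw [hπ.map_relMatrix_comp hG.rightUnique hGc hG'c]
  exact norm_defect_mul_le (hπ.mul_adjoint_mul_map_relMatrix hG hGc)
    (hπ.mul_adjoint_mul_map_relMatrix hG' hG'c) (hπ.commute_map_relMatrix hG hG' hGc hG'c) ξ

theorem defect_map_relMatrix_iUnion (hπ : IsRepresentation π) {ι : Type*} [Fintype ι]
    {G : ι → SetRel X X} (hG : IsPartialBij (⋃ i, G i)) (hGc : Controlled (⋃ i, G i))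
    (hd : Pairwise (Disjoint on G)) (ξ : H) :
    defect (π (relMatrix (⋃ i, G i))) ξ = ∑ i, defect (π (relMatrix (G i))) ξ := by
  have hGic (i : ι) : Controlled (G i) := hGc.mono (Set.subset_iUnion G i)
  rw [relMatrix_iUnion hd, hπ.map_sum _ fun i _ => cuElem_relMatrix (hGic i)]
  refine defect_sum (fun i j hij => ?_) ξ
  dsimp only
  rw [← hπ.map_relMatrix_inv (hGic j),
    ← hπ.map_relMatrix_comp (hG.mono (Set.subset_iUnion G i)).rightUnique (hGic i) (hGic j).inv,
    hG.comp_inv_eq_empty (Set.subset_iUnion G i) (Set.subset_iUnion G j) (hd hij),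
    relMatrix_empty, hπ.map_zero]

end IsRepresentation

theorem exists_injective_prodMk_of_encard_preimage_le {α β : Type*} (f : α → β) {N : ℕ}
    (hf : ∀ b, (f ⁻¹' {b}).encard ≤ N) : ∃ c : α → Fin N, Injective fun a => (f a, c a) := by
  have hfin (b : β) : Finite (f ⁻¹' {b}) := (Set.finite_of_encard_le_coe (hf b)).to_subtype
  have hcard (b : β) : Nat.card (f ⁻¹' {b}) ≤ N := by
    rw [Nat.card_coe_set_eq]
    exact (Set.encard_le_coe_iff_finite_ncard_le.1 (hf b)).2
  let e (b : β) : f ⁻¹' {b} → Fin N := fun a => Fin.castLE (hcard b) (Finite.equivFin _ a)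
  have he (b : β) : Injective (e b) := (Fin.castLE_injective _).comp (Finite.equivFin _).injective
  let c (a : α) : Fin N := e (f a) ⟨a, rfl⟩
  have hc (a : α) {b : β} (h : f a = b) : c a = e b ⟨a, h⟩ := by
    subst h
    rfl
  refine ⟨c, fun a a' h => ?_⟩
  obtain ⟨hfa, hca⟩ := Prod.mk.inj h
  exact congrArg Subtype.val (he _ ((hc a rfl).symm.trans (hca.trans (hc a' hfa.symm))))

section Splitting

variable [EMetricSpace X]

def SplitsInto (F C : SetRel X X) (N : ℕ) : Prop :=
  ∀ G : SetRel X X, IsPartialBij G → G ⊆ F ○ C → ∃ A B : Fin N → SetRel X X,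
    (∀ j, IsPartialBij (A j) ∧ A j ⊆ F) ∧ (∀ j, IsPartialBij (B j) ∧ B j ⊆ C) ∧
    Pairwise (Disjoint on fun j => A j ○ B j) ∧ G = ⋃ j, A j ○ B j

theorem exists_splitsInto (hX : BoundedGeometry X) {F C : SetRel X X} (hC : Controlled C) :
    ∃ N, SplitsInto F C N := by
  obtain ⟨R, hR, hCR⟩ := hC
  obtain ⟨N, hN⟩ := hX R hR
  refine ⟨N, fun G hG hGFC => ?_⟩
  choose mid hmidF hmidC using fun p : G => hGFC p.2
  -- the points of `G` through a given midpoint `z` have distinct targets in the `R`-ball of `z`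
  have hfiber (z : X) : (mid ⁻¹' {z}).encard ≤ N := by
    refine (Set.encard_le_encard_of_injOn (f := fun p : G => p.1.2) ?_ hG.injective_snd.injOn).trans
      (Set.encard_le_coe_iff_finite_ncard_le.2 (hN z))
    rintro p (rfl : mid p = z)
    exact hCR (hmidC p)
  obtain ⟨c, hc⟩ := exists_injective_prodMk_of_encard_preimage_le mid hfiber
  have hmid (j : Fin N) : {p | c p = j}.InjOn mid := fun p hp q hq h =>
    hc (Prod.ext h (hp.trans hq.symm))
  refine ⟨fun j => (fun p : G => (p.1.1, mid p)) '' {p | c p = j},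
    fun j => (fun p : G => (mid p, p.1.2)) '' {p | c p = j},
    fun j => ⟨IsPartialBij.of_image hG.injective_fst.injOn (hmid j), ?_⟩,
    fun j => ⟨IsPartialBij.of_image (hmid j) hG.injective_snd.injOn, ?_⟩, ?_, ?_⟩
  · rintro _ ⟨p, -, rfl⟩
    exact hmidF p
  · rintro _ ⟨p, -, rfl⟩
    exact hmidC p
  · intro i j hij
    simp only [onFun, image_comp_image (hmid _)]
    exact (Set.disjoint_image_iff Subtype.val_injective).2
      (Set.disjoint_left.2 fun p hi hj => hij (hi.symm.trans hj))
  · simp only [image_comp_image (hmid _)]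
    rw [← Set.image_iUnion, Set.iUnion_eq_univ_iff.2 fun p => ⟨c p, rfl⟩, Set.image_univ]
    exact Subtype.range_coe.symm

end Splitting

section PropertyT

variable [EMetricSpace X]

theorem isPartialTranslation_zero : IsPartialTranslation (0 : X → X → ℂ) := by
  simpa using isPartialTranslation_relMatrix (G := ∅) ⟨fun _ _ _ h => h.elim, fun _ _ _ h => h.elim⟩
    controlled_empty

def DefectBoundedOn (π : (X → X → ℂ) → (H →L[ℂ] H)) (ξ : H) (F : SetRel X X) (ε : ℝ) : Prop :=
  ∀ v, IsPartialTranslation v → matSupport v ⊆ F → ‖π v ξ - π (matMul v (matStar v)) ξ‖ ≤ ε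

variable [CompleteSpace H] {π : (X → X → ℂ) → (H →L[ℂ] H)} {ξ : H} {F C : SetRel X X} {ε δ : ℝ}

theorem DefectBoundedOn.norm_defect_relMatrix_le (hπ : IsRepresentation π)
    (h : DefectBoundedOn π ξ F ε) {G : SetRel X X} (hG : IsPartialBij G) (hGc : Controlled G)
    (hGF : G ⊆ F) : ‖defect (π (relMatrix G)) ξ‖ ≤ ε := by
  rw [← hπ.sub_map_mul_matStar (cuElem_relMatrix hGc)]
  exact h _ (isPartialTranslation_relMatrix hG hGc) (by simpa using hGF)

theorem DefectBoundedOn.comp (hπ : IsRepresentation π) {N : ℕ} (hsplit : SplitsInto F C N)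
    (hF : Controlled F) (hC : Controlled C) (hFε : DefectBoundedOn π ξ F ε)
    (hCδ : DefectBoundedOn π ξ C δ) : DefectBoundedOn π ξ (F ○ C) (N * (ε + δ)) := by
  intro v hv hvFC
  obtain ⟨A, B, hA, hB, hd, hAB⟩ := hsplit _ hv.isPartialBij hvFC
  have hAc (j : Fin N) : Controlled (A j) := hF.mono (hA j).2
  have hBc (j : Fin N) : Controlled (B j) := hC.mono (hB j).2
  have hpiece (j : Fin N) : ‖defect (π (relMatrix (A j ○ B j))) ξ‖ ≤ ε + δ :=
    (hπ.norm_defect_map_relMatrix_comp_le (hA j).1 (hB j).1 (hAc j) (hBc j) ξ).trans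
      (add_le_add (hFε.norm_defect_relMatrix_le hπ (hA j).1 (hAc j) (hA j).2)
        (hCδ.norm_defect_relMatrix_le hπ (hB j).1 (hBc j) (hB j).2))
  rw [hπ.sub_map_mul_matStar hv.cuElem, ← hv.relMatrix_matSupport, hAB,
    hπ.defect_map_relMatrix_iUnion (hAB ▸ hv.isPartialBij) (hAB ▸ hv.2.2.2) hd]
  calc ‖∑ j, defect (π (relMatrix (A j ○ B j))) ξ‖ ≤ ∑ _j : Fin N, (ε + δ) :=
        (norm_sum_le _ _).trans (Finset.sum_le_sum fun j _ => hpiece j)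
    _ = N * (ε + δ) := by simp [mul_add]

end PropertyT

theorem exists_defectBoundedOn_compPow [EMetricSpace X] (hX : BoundedGeometry X)
    {F : SetRel X X} (hF : Controlled F) (n : ℕ) :
    ∃ K : ℝ, 0 ≤ K ∧ ∀ (H : Type*) [NormedAddCommGroup H] [InnerProductSpace ℂ H]
      [CompleteSpace H] (π : (X → X → ℂ) → (H →L[ℂ] H)), IsRepresentation π →
      ∀ (ξ : H) (ε : ℝ), DefectBoundedOn π ξ F ε → DefectBoundedOn π ξ (compPow F n) (K * ε) := by
  induction n with
  | zero => exact ⟨1, zero_le_one, fun H _ _ _ π _ ξ ε h => by simpa [compPow] using h⟩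
  | succ n ih =>
    obtain ⟨K, hK, hKF⟩ := ih
    obtain ⟨N, hN⟩ := exists_splitsInto hX (F := F) (hF.compPow n)
    refine ⟨N * (1 + K), by positivity, fun H _ _ _ π hπ ξ ε h => ?_⟩
    rw [show (N : ℝ) * (1 + K) * ε = N * (ε + K * ε) by ring]
    exact h.comp hπ hN hF (hF.compPow n) (hKF H π hπ ξ ε h)

/-- `X` has Property (T) iff the Kazhdan-type inequality holds for
a single controlled generating set. -/
theorem statement8 {X : Type*} [EMetricSpace X] (hX : IsSpace X) :
    HasPropertyT X ↔
      ∃ E : Set (X × X), Generating E ∧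
        ∃ c : ℝ, 0 < c ∧
          ∀ (H : Type) [NormedAddCommGroup H] [InnerProductSpace ℂ H] [CompleteSpace H]
            (π : (X → X → ℂ) → (H →L[ℂ] H)), IsRepresentation π →
            ∀ ξ ∈ (invariantSubmodule π)ᗮ,
              ∃ v : X → X → ℂ, IsPartialTranslation v ∧ matSupport v ⊆ E ∧
                c * ‖ξ‖ ≤ ‖π v ξ - π (matMul v (matStar v)) ξ‖ := by
  refine ⟨fun hT => ?_, ?_⟩
  · obtain ⟨E, hE⟩ := hX.monogenic
    exact ⟨E, hE, hT E hE⟩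
  rintro ⟨E, hE, c, hc, hKazhdan⟩ F hF
  obtain ⟨n, hEF⟩ := hF.2 E hE.1
  obtain ⟨K, hK, hKF⟩ := exists_defectBoundedOn_compPow hX.boundedGeometry hF.1 n
  refine ⟨c / (K + 1), by positivity, fun H _ _ _ π hπ ξ hξ => ?_⟩
  by_contra! hsmall
  have hξ0 : 0 < ‖ξ‖ := pos_of_mul_pos_right ((norm_nonneg _).trans_lt
    (hsmall 0 isPartialTranslation_zero (by simp [matSupport]))) (by positivity)
  obtain ⟨v, hv, hvE, hcv⟩ := hKazhdan H π hπ ξ hξ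
  have hvK := hKF H π hπ ξ _ (fun w hw hwF => (hsmall w hw hwF).le) v hv (hvE.trans hEF)
  have hK1 : K / (K + 1) < 1 := (div_lt_one (by positivity)).2 (lt_add_one K)
  have hscale : K * (c / (K + 1) * ‖ξ‖) = K / (K + 1) * (c * ‖ξ‖) := by ring
  nlinarith [mul_pos hc hξ0]

end GeomPropT
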